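/- arXiv:1912.01977 — 5 statements merged into one kernel-verified Lean document; each statement's English description precedes it below -/
import Mathlib

section
/- For every integer d ≥ 1 there exists a constant c_d > 0 (depending only on d) such that the following holds. Let C be a closed convex body in ℝ^d containing the closed unit ball centered at the origin and contained in the closed ball of radius d centered at the origin, and let ε be a real number with 0 < ε ≤ 1. Then there exists a finite family H of closed halfspaces of ℝ^d with |H| ≤ c_d · ε^{-(d-1)/2} such that C ⊆ ⋂_{h ∈ H} h ⊆ C_ε, where C_ε = {x ∈ ℝ^d : dist(x, C) ≤ ε} is the ε-expansion of C. -/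
open EuclideanSpace Metric

section aux
variable {E : Type*} [NormedAddCommGroup E] [InnerProductSpace ℝ E]

local notation "⟪" x ", " y "⟫" => @inner ℝ _ _ x y

lemma normalize_diff (a b : E) (ha : a ≠ 0) (hb : b ≠ 0) :
    ‖‖a‖⁻¹ • a - ‖b‖⁻¹ • b‖ ≤ 2 * ‖a - b‖ / ‖a‖ := by
  have ha' : (0:ℝ) < ‖a‖ := norm_pos_iff.2 ha
  have hb' : (0:ℝ) < ‖b‖ := norm_pos_iff.2 hb
  have key : ‖a‖⁻¹ • a - ‖b‖⁻¹ • b = ‖a‖⁻¹ • (a - b) + (‖a‖⁻¹ - ‖b‖⁻¹) • b := by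
    rw [smul_sub, sub_smul]; abel
  rw [key]
  have h1 : ‖‖a‖⁻¹ • (a - b)‖ = ‖a - b‖ / ‖a‖ := by
    rw [norm_smul, norm_inv, norm_norm]; ring
  have h2 : ‖(‖a‖⁻¹ - ‖b‖⁻¹) • b‖ ≤ ‖a - b‖ / ‖a‖ := by
    rw [norm_smul, Real.norm_eq_abs]
    have e1 : ‖a‖⁻¹ - ‖b‖⁻¹ = (‖b‖ - ‖a‖) / (‖a‖ * ‖b‖) := by
      field_simp
    rw [e1, abs_div, abs_of_pos (by positivity : (0:ℝ) < ‖a‖ * ‖b‖)]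
    have e2 : |‖b‖ - ‖a‖| ≤ ‖a - b‖ := by
      rw [abs_sub_comm]; exact abs_norm_sub_norm_le a b
    calc |‖b‖ - ‖a‖| / (‖a‖ * ‖b‖) * ‖b‖ = |‖b‖ - ‖a‖| / ‖a‖ := by
          field_simp
      _ ≤ ‖a - b‖ / ‖a‖ := by gcongr
  calc ‖‖a‖⁻¹ • (a - b) + (‖a‖⁻¹ - ‖b‖⁻¹) • b‖
      ≤ ‖‖a‖⁻¹ • (a - b)‖ + ‖(‖a‖⁻¹ - ‖b‖⁻¹) • b‖ := norm_add_le _ _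
    _ ≤ ‖a - b‖ / ‖a‖ + ‖a - b‖ / ‖a‖ := by rw [h1]; gcongr
    _ = 2 * ‖a - b‖ / ‖a‖ := by ring

lemma exists_proj [CompleteSpace E] {C : Set E} (hC : Convex ℝ C) (hcl : IsClosed C)
    (hne : C.Nonempty) (x : E) : ∃ p ∈ C, ∀ w ∈ C, ⟪x - p, w - p⟫ ≤ 0 := by
  obtain ⟨p, hp, hmin⟩ := exists_norm_eq_iInf_of_complete_convex hne hcl.isComplete hC x
  exact ⟨p, hp, (norm_eq_iInf_iff_real_inner_le_zero hC hp).1 hmin⟩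

lemma coord_abs_le_norm {d : ℕ} (x : EuclideanSpace ℝ (Fin d)) (i : Fin d) : |x i| ≤ ‖x‖ := by
  rw [EuclideanSpace.norm_eq x]
  have h1 : |x i| = Real.sqrt (‖x i‖^2) := by
    rw [Real.sqrt_sq_eq_abs, Real.norm_eq_abs, abs_abs]
  rw [h1]
  apply Real.sqrt_le_sqrt
  exact Finset.single_le_sum (f := fun i => ‖x i‖^2) (fun j _ => by positivity) (Finset.mem_univ i)

end aux

local notation "⟪" x ", " y "⟫" => @inner ℝ _ _ x y

set_option maxHeartbeats 2000000 in
/-- **Dudley's convex approximation theorem.** For every `d ≥ 1` there is a constant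
`c_d > 0` such that any closed convex body `C` in `ℝ^d` sandwiched between the unit ball
and the ball of radius `d` can be `ε`-approximated (for `0 < ε ≤ 1`) from the outside by
an intersection of at most `c_d · ε^{-(d-1)/2}` closed halfspaces. -/
theorem dudley_convex_approximation (d : ℕ) (hd : 1 ≤ d) :
    ∃ c : ℝ, 0 < c ∧
      ∀ C : Set (EuclideanSpace ℝ (Fin d)),
        IsClosed C → Convex ℝ C →
        Metric.closedBall (0 : EuclideanSpace ℝ (Fin d)) 1 ⊆ C →
        C ⊆ Metric.closedBall (0 : EuclideanSpace ℝ (Fin d)) d →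
        ∀ ε : ℝ, 0 < ε → ε ≤ 1 →
          ∃ H : Finset (Set (EuclideanSpace ℝ (Fin d))),
            (∀ h ∈ H, ∃ (u : EuclideanSpace ℝ (Fin d)) (b : ℝ),
                ‖u‖ = 1 ∧ h = {x | inner ℝ x u ≤ b}) ∧
            (H.card : ℝ) ≤ c * ε ^ (-((d : ℝ) - 1) / 2) ∧
            (C ⊆ ⋂ h ∈ H, h) ∧
            (⋂ h ∈ H, h) ⊆ Metric.cthickening ε C := by
  classical
  set E := EuclideanSpace ℝ (Fin d) with hE
  have hd1 : (1:ℝ) ≤ (d:ℝ) := by exact_mod_cast hd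
  have hdpos : (0:ℝ) < d := by linarith
  refine ⟨2*d*(128*d^2)^(d-1), by positivity, ?_⟩
  intro C hcl hconv hball hsub ε hε hε1
  -- basic setup
  have h0C : (0:E) ∈ C := hball (by simp)
  have hCne : C.Nonempty := ⟨0, h0C⟩
  set δ : ℝ := Real.sqrt ε / 8 with hδdef
  have hsqε : (0:ℝ) < Real.sqrt ε := Real.sqrt_pos.2 hε
  have hsqε1 : Real.sqrt ε ≤ 1 := by
    rw [show (1:ℝ) = Real.sqrt 1 by simp]; exact Real.sqrt_le_sqrt hε1
  have hδpos : 0 < δ := by positivity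
  have hδle : δ ≤ 1/8 := by rw [hδdef]; linarith
  have hδsq : δ^2 = ε/64 := by
    rw [hδdef, div_pow, Real.sq_sqrt hε.le]; ring
  set R : ℝ := 2*d with hRdef
  have hRpos : 0 < R := by positivity
  set η : ℝ := δ / (2*d) with hηdef
  have hηpos : 0 < η := by positivity
  set K : ℕ := ⌈2*R/η⌉₊ with hKdef
  set G : Finset ℝ := (Finset.range (K+1)).image (fun k : ℕ => -R + (k:ℝ) * η) with hGdef
  -- grid covering
  have hGcov : ∀ r : ℝ, -R ≤ r → r ≤ R → ∃ g ∈ G, |g - r| ≤ η := by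
    intro r h1 h2
    set k : ℕ := ⌊(r + R)/η⌋₊ with hk
    have hrR : 0 ≤ (r + R)/η := div_nonneg (by linarith) hηpos.le
    have hk1 : (k:ℝ) ≤ (r + R)/η := Nat.floor_le hrR
    have hk2 : (r + R)/η < k + 1 := Nat.lt_floor_add_one _
    refine ⟨-R + k * η, ?_, ?_⟩
    · refine Finset.mem_image.2 ⟨k, Finset.mem_range.2 ?_, rfl⟩
      have : k ≤ K := le_trans (Nat.floor_le_floor (by gcongr; linarith)) (Nat.floor_le_ceil _)
      omega
    · rw [abs_le]
      constructor
      · have : (k:ℝ) * η ≥ (r + R) - η := by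
          rw [ge_iff_le, sub_le_iff_le_add]
          calc r + R ≤ ((k:ℝ) + 1) * η := by
                rw [← div_le_iff₀ hηpos] at *; linarith
            _ = k * η + η := by ring
        linarith
      · have : (k:ℝ) * η ≤ r + R := by
          rw [← le_div_iff₀ hηpos]; exact hk1
        linarith
  have hηval : η = Real.sqrt ε / (16*d) := by
    rw [hηdef, hδdef, div_div]; congr 1; ring
  have hGcard : (G.card : ℝ) ≤ 128 * d^2 / Real.sqrt ε := by
    have h1 : (G.card : ℝ) ≤ (K:ℝ) + 1 := by
      calc (G.card : ℝ) ≤ ((Finset.range (K+1)).card : ℝ) := by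
            exact_mod_cast Finset.card_image_le
        _ = (K:ℝ) + 1 := by simp
    have h2 : (K:ℝ) < 2*R/η + 1 := Nat.ceil_lt_add_one (by positivity)
    have h3 : 2*R/η = 64 * d^2 / Real.sqrt ε := by
      rw [hηval, hRdef]; field_simp; ring
    have h4 : (2:ℝ) ≤ 64 * d^2 / Real.sqrt ε := by
      rw [le_div_iff₀ hsqε]
      nlinarith
    rw [h3] at h2
    have : 128 * (d:ℝ)^2 / Real.sqrt ε = 64 * d^2 / Real.sqrt ε + 64 * d^2 / Real.sqrt ε := by
      ring
    linarith
  -- the cube-surface net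
  set F : Fin d → Fin d → Finset ℝ :=
    fun i j => if j = i then ({-R, R} : Finset ℝ) else G with hFdef
  set Nc : Finset E := Finset.univ.biUnion
    (fun i => (Fintype.piFinset (F i)).map
      (WithLp.equiv 2 (Fin d → ℝ)).symm.toEmbedding) with hNcdef
  have hNcnorm : ∀ w ∈ Nc, R ≤ ‖w‖ := by
    intro w hw
    obtain ⟨i, -, hmem⟩ := Finset.mem_biUnion.1 hw
    obtain ⟨a, ha, rfl⟩ := Finset.mem_map.1 hmem
    have hai : a i ∈ ({-R, R} : Finset ℝ) := by
      have := (Fintype.mem_piFinset.1 ha) i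
      simpa [hFdef] using this
    have habs : |a i| = R := by
      rcases Finset.mem_insert.1 hai with h | h
      · rw [h, abs_neg, abs_of_pos hRpos]
      · rw [Finset.mem_singleton.1 h, abs_of_pos hRpos]
    have hcoord : ((WithLp.equiv 2 (Fin d → ℝ)).symm.toEmbedding a) i = a i := rfl
    calc R = |((WithLp.equiv 2 (Fin d → ℝ)).symm.toEmbedding a) i| := by rw [hcoord, habs]
      _ ≤ _ := coord_abs_le_norm _ i
  have hprodcard : ∀ i : Fin d, (Fintype.piFinset (F i)).card ≤ 2 * G.card^(d-1) := by
    intro i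
    rw [Fintype.card_piFinset]
    have h1 : ∏ j, (F i j).card
        = (F i i).card * ∏ j ∈ Finset.univ.erase i, (F i j).card :=
      (Finset.mul_prod_erase Finset.univ _ (Finset.mem_univ i)).symm
    have h2 : ∏ j ∈ Finset.univ.erase i, (F i j).card = G.card^(d-1) := by
      have : ∀ j ∈ Finset.univ.erase i, (F i j).card = G.card := by
        intro j hj
        have hne := (Finset.mem_erase.1 hj).1
        simp [hFdef, hne]
      rw [Finset.prod_congr rfl this, Finset.prod_const,
        Finset.card_erase_of_mem (Finset.mem_univ i), Finset.card_univ, Fintype.card_fin]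
    have h3 : (F i i).card ≤ 2 := by
      simp only [hFdef, if_pos rfl]
      exact (Finset.card_insert_le _ _).trans (by simp)
    calc ∏ j, (F i j).card = (F i i).card * G.card^(d-1) := by rw [h1, h2]
      _ ≤ 2 * G.card^(d-1) := Nat.mul_le_mul_right _ h3
  have hrpow : ε ^ (-((d : ℝ) - 1) / 2) = ((Real.sqrt ε) ^ (d-1))⁻¹ := by
    have hn : ((d:ℝ) - 1) = ((d-1 : ℕ) : ℝ) := by
      rw [Nat.cast_sub hd]; norm_num
    rw [hn, Real.sqrt_eq_rpow, ← Real.rpow_natCast (ε ^ ((1:ℝ)/2)) (d-1),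
      ← Real.rpow_mul hε.le, ← Real.rpow_neg hε.le]
    congr 1
    ring
  have hNccard : (Nc.card : ℝ) ≤ 2*d*(128*d^2)^(d-1) * ε ^ (-((d : ℝ) - 1) / 2) := by
    have h1 : Nc.card ≤ d * (2 * G.card^(d-1)) := by
      calc Nc.card ≤ ∑ i : Fin d, ((Fintype.piFinset (F i)).map
            (WithLp.equiv 2 (Fin d → ℝ)).symm.toEmbedding).card :=
            Finset.card_biUnion_le
        _ = ∑ i : Fin d, (Fintype.piFinset (F i)).card := by
            simp [Finset.card_map]
        _ ≤ ∑ _i : Fin d, 2 * G.card^(d-1) := Finset.sum_le_sum (fun i _ => hprodcard i)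
        _ = d * (2 * G.card^(d-1)) := by simp [Finset.sum_const, mul_comm]
    have h2 : ((Nc.card : ℕ) : ℝ) ≤ (d:ℝ) * (2 * (G.card:ℝ)^(d-1)) := by
      exact_mod_cast h1
    have h3 : ((G.card:ℝ))^(d-1) ≤ (128 * d^2 / Real.sqrt ε)^(d-1) := by
      exact pow_le_pow_left₀ (Nat.cast_nonneg _) hGcard _
    have h4 : (128 * (d:ℝ)^2 / Real.sqrt ε)^(d-1)
        = (128*(d:ℝ)^2)^(d-1) * ((Real.sqrt ε)^(d-1))⁻¹ := by
      rw [div_pow, div_eq_mul_inv]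
    rw [hrpow]
    calc ((Nc.card : ℕ) : ℝ) ≤ (d:ℝ) * (2 * (128 * d^2 / Real.sqrt ε)^(d-1)) := by
          refine h2.trans ?_
          gcongr
        _ = 2*d*(128*d^2)^(d-1) * ((Real.sqrt ε)^(d-1))⁻¹ := by
          rw [h4]; ring
  set φ : E → E := fun w => (R / ‖w‖) • w with hφdef
  set N : Finset E := Nc.image φ with hNdef
  have hNnorm : ∀ y ∈ N, ‖y‖ = R := by
    intro y hy
    obtain ⟨w, hw, rfl⟩ := Finset.mem_image.1 hy
    have hwR := hNcnorm w hw
    have hw0 : ‖w‖ ≠ 0 := ne_of_gt (lt_of_lt_of_le hRpos hwR)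
    simp only [hφdef, norm_smul, Real.norm_eq_abs, abs_div, abs_of_pos hRpos,
      abs_of_pos (lt_of_lt_of_le hRpos hwR)]
    field_simp
  have hNcov : ∀ z : E, ‖z‖ = R → ∃ y ∈ N, ‖y - z‖ ≤ δ := by
    intro z hz
    have : Nonempty (Fin d) := ⟨⟨0, hd⟩⟩
    set M : ℝ := Finset.univ.sup' Finset.univ_nonempty (fun i => |z i|) with hMdef
    obtain ⟨i1, -, hi1⟩ := Finset.exists_mem_eq_sup' (Finset.univ_nonempty) (fun i => |z i|)
    have hMub : ∀ j, |z j| ≤ M := by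
      intro j; rw [hMdef]
      exact Finset.le_sup' (fun i => |z i|) (Finset.mem_univ j)
    have hz0 : z ≠ 0 := by
      intro h; rw [h, norm_zero] at hz; exact (hRpos.ne hz).elim
    have hMpos : 0 < M := by
      obtain ⟨i0, hi0⟩ : ∃ i, z i ≠ 0 := by
        by_contra hc; push_neg at hc
        exact hz0 (by ext i; exact hc i)
      exact lt_of_lt_of_le (abs_pos.2 hi0) (hMub i0)
    have hMleR : M ≤ R := by
      have h := hMdef.trans hi1
      rw [h, ← hz]; exact coord_abs_le_norm z i1
    set w : E := (R / M) • z with hwdef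
    have hwj : ∀ j, w j = (R/M) * z j := fun j => rfl
    have hRM : 0 < R / M := by positivity
    have hwle : ∀ j, |w j| ≤ R := by
      intro j
      rw [hwj, abs_mul, abs_of_pos hRM]
      calc R/M * |z j| ≤ R/M * M := by gcongr; exact hMub j
        _ = R := by field_simp
    have hwi1 : |w i1| = R := by
      rw [hwj, abs_mul, abs_of_pos hRM, ← hi1]
      field_simp
      exact hMdef.symm
    choose g hgG hgclose using fun j =>
      hGcov (w j) (abs_le.1 (hwle j)).1 (abs_le.1 (hwle j)).2
    set a : Fin d → ℝ := fun j => if j = i1 then w i1 else g j with hadef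
    have ha : a ∈ Fintype.piFinset (F i1) := by
      rw [Fintype.mem_piFinset]
      intro j
      by_cases hj : j = i1
      · subst hj
        simp only [hadef, if_pos rfl, hFdef]
        rcases (abs_eq hRpos.le).1 hwi1 with h | h
        · simp [h]
        · simp [h]
      · simp only [hadef, if_neg hj, hFdef]
        simp [hj, hgG j]
    set y' : E := (WithLp.equiv 2 (Fin d → ℝ)).symm a with hy'def
    have hy'Nc : y' ∈ Nc := by
      refine Finset.mem_biUnion.2 ⟨i1, Finset.mem_univ _, ?_⟩
      exact Finset.mem_map.2 ⟨a, ha, rfl⟩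
    have hy'j : ∀ j, y' j = a j := fun j => rfl
    have hy'w : ‖y' - w‖ ≤ δ/2 := by
      have hterm : ∀ j, ‖(y' - w) j‖^2 ≤ η^2 := by
        intro j
        have : (y' - w) j = a j - w j := rfl
        rw [this]
        by_cases hj : j = i1
        · subst hj
          have h0 : a j - w j = 0 := by simp [hadef]
          rw [h0, norm_zero]
          nlinarith [sq_nonneg η]
        · have h0 : a j - w j = g j - w j := by simp [hadef, hj]
          rw [h0, Real.norm_eq_abs, sq_abs]
          have := hgclose j
          nlinarith [abs_nonneg (g j - w j), abs_le.1 this]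
      rw [EuclideanSpace.norm_eq]
      have hsum : ∑ j, ‖(y' - w) j‖^2 ≤ (d:ℝ) * η^2 := by
        calc ∑ j, ‖(y' - w) j‖^2 ≤ ∑ _j : Fin d, η^2 :=
              Finset.sum_le_sum (fun j _ => hterm j)
          _ = (d:ℝ) * η^2 := by simp [mul_comm]
      have hdη : (d:ℝ) * η^2 ≤ (δ/2)^2 := by
        have e1 : (d:ℝ) * η^2 = δ^2/(4*d) := by
          rw [hηdef]; field_simp; ring
        have e2 : (δ/2)^2 = δ^2/4 := by ring
        rw [e1, e2, div_le_div_iff₀ (by positivity) (by norm_num)]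
        nlinarith [sq_nonneg δ]
      calc Real.sqrt (∑ j, ‖(y' - w) j‖^2) ≤ Real.sqrt ((δ/2)^2) :=
            Real.sqrt_le_sqrt (hsum.trans hdη)
        _ = δ/2 := Real.sqrt_sq (by positivity)
    have hy'R : R ≤ ‖y'‖ := hNcnorm y' hy'Nc
    have hy'0 : y' ≠ 0 := by
      intro h; rw [h, norm_zero] at hy'R; linarith
    have hwnorm : ‖w‖ = R^2 / M := by
      rw [hwdef, norm_smul, Real.norm_eq_abs, abs_of_pos hRM, hz]
      field_simp
    have hwR : R ≤ ‖w‖ := by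
      rw [hwnorm]
      rw [le_div_iff₀ hMpos]
      nlinarith
    have hw0 : w ≠ 0 := by
      intro h; rw [h, norm_zero] at hwR; linarith
    have hφw : φ w = z := by
      rw [hφdef]
      simp only
      rw [hwdef, smul_smul, hwnorm]
      have : R / (R^2 / M) * (R / M) = 1 := by
        field_simp
      rw [this, one_smul]
    refine ⟨φ y', Finset.mem_image_of_mem φ hy'Nc, ?_⟩
    have hsplit : ∀ v : E, φ v = R • (‖v‖⁻¹ • v) := by
      intro v; rw [hφdef]; simp only [smul_smul]; rw [div_eq_mul_inv]
    have hdiff : φ y' - z = R • (‖y'‖⁻¹ • y' - ‖w‖⁻¹ • w) := by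
      rw [← hφw, hsplit, hsplit, ← smul_sub]
    rw [hdiff, norm_smul, Real.norm_eq_abs, abs_of_pos hRpos]
    have hnd : ‖‖y'‖⁻¹ • y' - ‖w‖⁻¹ • w‖ ≤ 2 * ‖y' - w‖ / ‖w‖ := by
      have := normalize_diff w y' hw0 hy'0
      rw [norm_sub_rev (‖w‖⁻¹ • w), norm_sub_rev w] at this
      exact this
    calc R * ‖‖y'‖⁻¹ • y' - ‖w‖⁻¹ • w‖ ≤ R * (2 * ‖y' - w‖ / ‖w‖) := by gcongr
      _ ≤ R * (2 * (δ/2) / R) := by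
          have h9 : 2 * ‖y' - w‖ / ‖w‖ ≤ 2 * (δ/2) / R :=
            div_le_div₀ (by positivity) (by linarith) hRpos hwR
          exact mul_le_mul_of_nonneg_left h9 hRpos.le
      _ = δ := by field_simp
  -- projections
  choose P hPmem hPvar using fun y : E => exists_proj hconv hcl hCne y
  set U : E → E := fun y => ‖y - P y‖⁻¹ • (y - P y) with hUdef
  set B : E → ℝ := fun y => ⟪P y, U y⟫ with hBdef
  set H : Finset (Set E) := N.image (fun y => {x : E | ⟪x, U y⟫ ≤ B y}) with hHdef
  have hPnorm : ∀ y : E, ‖P y‖ ≤ d := fun y => by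
    have := hsub (hPmem y); simpa [mem_closedBall, dist_eq_norm] using this
  have hNm : ∀ y ∈ N, (1:ℝ) ≤ ‖y - P y‖ := by
    intro y hy
    have h1 : ‖y - P y‖ ≥ ‖y‖ - ‖P y‖ := norm_sub_norm_le _ _
    have := hPnorm y
    rw [hNnorm y hy] at h1
    rw [hRdef] at h1; linarith
  have hUnit : ∀ y ∈ N, ‖U y‖ = 1 := by
    intro y hy
    have h1 := hNm y hy
    have h0 : ‖y - P y‖ ≠ 0 := by linarith
    simp only [hUdef, norm_smul, norm_inv, norm_norm]
    field_simp
  refine ⟨H, ?_, ?_, ?_, ?_⟩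
  · -- halfspaces
    intro h hh
    obtain ⟨y, hy, rfl⟩ := Finset.mem_image.1 hh
    exact ⟨U y, B y, hUnit y hy, rfl⟩
  · -- cardinality
    calc (H.card : ℝ) ≤ (N.card : ℝ) := by exact_mod_cast Finset.card_image_le
      _ ≤ (Nc.card : ℝ) := by exact_mod_cast Finset.card_image_le
      _ ≤ _ := hNccard
  · -- C ⊆ ⋂
    intro w hw
    refine Set.mem_iInter₂.2 fun h hh => ?_
    obtain ⟨y, hy, rfl⟩ := Finset.mem_image.1 hh
    have h1 := hNm y hy
    have h0 : (0:ℝ) < ‖y - P y‖ := by linarith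
    have hvar := hPvar y w hw
    simp only [Set.mem_setOf_eq, hBdef, hUdef]
    have : ⟪w, ‖y - P y‖⁻¹ • (y - P y)⟫ - ⟪P y, ‖y - P y‖⁻¹ • (y - P y)⟫
        = ‖y - P y‖⁻¹ * ⟪y - P y, w - P y⟫ := by
      rw [← inner_sub_left, real_inner_smul_right, real_inner_comm]
    change ⟪w, ‖y - P y‖⁻¹ • (y - P y)⟫ ≤ ⟪P y, ‖y - P y‖⁻¹ • (y - P y)⟫
    nlinarith [mul_nonpos_of_nonneg_of_nonpos (inv_nonneg.2 h0.le) hvar]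
  · -- main containment
    intro x hx
    set q : E := P x with hqdef
    have hqC : q ∈ C := hPmem x
    have hqvar : ∀ w ∈ C, ⟪x - q, w - q⟫ ≤ 0 := hPvar x
    have hqnorm : ‖q‖ ≤ d := by
      have := hsub hqC; simpa [mem_closedBall, dist_eq_norm] using this
    set t : ℝ := ‖x - q‖ with htdef
    have ht0 : 0 ≤ t := norm_nonneg _
    have hdone : t ≤ ε → x ∈ Metric.cthickening ε C := by
      intro hle
      exact mem_cthickening_of_dist_le x q ε C hqC (by rw [dist_eq_norm, ← htdef]; exact hle)
    rcases eq_or_lt_of_le ht0 with ht | ht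
    · exact hdone (by linarith)
    have htne : t ≠ 0 := ht.ne'
    set v : E := t⁻¹ • (x - q) with hvdef
    have hxq : x - q = t • v := by
      rw [hvdef, smul_smul, mul_inv_cancel₀ htne, one_smul]
    have hvnorm : ‖v‖ = 1 := by
      rw [hvdef, norm_smul, Real.norm_eq_abs, abs_inv, abs_of_pos ht, ← htdef,
        inv_mul_cancel₀ htne]
    set β : ℝ := ⟪q, v⟫ with hβdef
    set D : ℝ := β^2 + (R^2 - ‖q‖^2) with hDdef
    have hq2 : ‖q‖^2 ≤ (d:ℝ)^2 := pow_le_pow_left₀ (norm_nonneg q) hqnorm 2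
    have hR2 : R^2 = 4*(d:ℝ)^2 := by rw [hRdef]; ring
    have hD : 0 ≤ D := by
      rw [hDdef, hR2]
      have h1 := sq_nonneg β
      have h2 := sq_nonneg (d:ℝ)
      linarith
    set sD : ℝ := Real.sqrt D with hsDdef
    have hsD2 : sD^2 = D := Real.sq_sqrt hD
    set s : ℝ := -β + sD with hsdef
    have hs0 : 0 ≤ s := by
      have h1 : Real.sqrt (β^2) ≤ sD := by
        apply Real.sqrt_le_sqrt
        rw [hDdef, hR2]
        have h2 := sq_nonneg (d:ℝ)
        linarith
      rw [Real.sqrt_sq_eq_abs] at h1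
      have := le_abs_self β
      rw [hsdef]; linarith
    set z : E := q + s • v with hzdef
    have hzq : z - q = s • v := by rw [hzdef]; abel
    have hsz : ‖z - q‖ = s := by
      rw [hzq, norm_smul, Real.norm_eq_abs, abs_of_nonneg hs0, hvnorm, mul_one]
    have hznorm : ‖z‖ = R := by
      have h2 : ‖z‖^2 = ‖q‖^2 + 2*(s*β) + s^2 := by
        rw [hzdef, norm_add_sq_real, real_inner_smul_right]
        rw [norm_smul, Real.norm_eq_abs, abs_of_nonneg hs0, hvnorm, ← hβdef]
        ring
      have hz2 : ‖z‖^2 = R^2 := by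
        rw [h2, hsdef]
        have hD' : sD^2 = β^2 + (R^2 - ‖q‖^2) := hsD2
        linear_combination hD'
      rw [← Real.sqrt_sq (norm_nonneg z), hz2, Real.sqrt_sq hRpos.le]
    have hs_d : (d:ℝ) ≤ s := by
      have h1 : ‖z‖ - ‖q‖ ≤ ‖z - q‖ := norm_sub_norm_le z q
      rw [hznorm, hsz, hRdef] at h1
      linarith
    have hs1 : (1:ℝ) ≤ s := le_trans hd1 hs_d
    have hzvar : ∀ w ∈ C, ⟪z - q, w - q⟫ ≤ 0 := by
      intro w hw
      rw [hzq, real_inner_smul_left]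
      have h1 := hqvar w hw
      have h2 : ⟪v, w - q⟫ ≤ 0 := by
        rw [hvdef, real_inner_smul_left]
        exact mul_nonpos_of_nonneg_of_nonpos (inv_nonneg.2 ht.le) h1
      exact mul_nonpos_of_nonneg_of_nonpos hs0 h2
    obtain ⟨y, hyN, hyz⟩ := hNcov z hznorm
    have hm1 : (1:ℝ) ≤ ‖y - P y‖ := hNm y hyN
    have hm0 : y - P y ≠ 0 := by
      intro h; rw [h, norm_zero] at hm1; linarith
    have hpq : ‖q - P y‖ ≤ δ := by
      have hA := hPvar y q hqC
      have hB2 := hzvar (P y) (hPmem y)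
      have h2 : 0 ≤ ⟪z - q, q - P y⟫ := by
        have e : q - P y = -(P y - q) := by abel
        rw [e, inner_neg_right]; linarith
      have e : (y - z) + (q - P y) = (y - P y) - (z - q) := by abel
      have h3 : ⟪y - z, q - P y⟫ + ⟪q - P y, q - P y⟫ ≤ 0 := by
        rw [← inner_add_left, e, inner_sub_left]
        linarith
      have h4 : ‖q - P y‖^2 ≤ ⟪z - y, q - P y⟫ := by
        have e2 : z - y = -(y - z) := by abel
        rw [e2, inner_neg_left, ← real_inner_self_eq_norm_sq]
        linarith
      have h5 : ⟪z - y, q - P y⟫ ≤ ‖z - y‖ * ‖q - P y‖ := real_inner_le_norm _ _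
      have h6 : ‖z - y‖ ≤ δ := by rw [norm_sub_rev]; exact hyz
      rcases eq_or_lt_of_le (norm_nonneg (q - P y)) with h7 | h7
      · rw [← h7]; exact hδpos.le
      · have h8 : ‖q - P y‖ * ‖q - P y‖ ≤ ‖z - y‖ * ‖q - P y‖ := by
          have := h4.trans h5
          rwa [pow_two] at this
        have h9 : ‖q - P y‖ ≤ ‖z - y‖ := le_of_mul_le_mul_right h8 h7
        linarith
    have hUy : ‖U y‖ = 1 := hUnit y hyN
    have hx_in : ⟪x, U y⟫ ≤ B y := by
      have hmem : ({x : E | ⟪x, U y⟫ ≤ B y}) ∈ H :=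
        Finset.mem_image_of_mem _ hyN
      exact Set.mem_iInter₂.1 hx _ hmem
    have hxpu : ⟪x - P y, U y⟫ ≤ 0 := by
      rw [inner_sub_left]
      have : B y = ⟪P y, U y⟫ := rfl
      linarith [hx_in, this ▸ hx_in]
    have hzq0 : z - q ≠ 0 := by
      intro h; rw [h, norm_zero] at hsz; linarith
    have hsne : s ≠ 0 := by linarith
    have hveq : v = ‖z - q‖⁻¹ • (z - q) := by
      rw [hsz, hzq, smul_smul, inv_mul_cancel₀ hsne, one_smul]
    have hdiffb : ‖(z - q) - (y - P y)‖ ≤ 2*δ := by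
      have e : (z - q) - (y - P y) = (z - y) + (P y - q) := by abel
      rw [e]
      calc ‖(z - y) + (P y - q)‖ ≤ ‖z - y‖ + ‖P y - q‖ := norm_add_le _ _
        _ ≤ δ + δ := by
            have h6 : ‖z - y‖ ≤ δ := by rw [norm_sub_rev]; exact hyz
            have h7 : ‖P y - q‖ ≤ δ := by rw [norm_sub_rev]; exact hpq
            linarith
        _ = 2*δ := by ring
    set κ : ℝ := ‖U y - v‖ with hκdef
    have hκ0 : 0 ≤ κ := norm_nonneg _
    have hκs : κ ≤ 4*δ/s := by
      have hnd := normalize_diff (z - q) (y - P y) hzq0 hm0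
      rw [← hveq] at hnd
      have e : ‖v - ‖y - P y‖⁻¹ • (y - P y)‖ = κ := by
        rw [hκdef, hUdef, norm_sub_rev]
      rw [e, hsz] at hnd
      calc κ ≤ 2 * ‖(z - q) - (y - P y)‖ / s := hnd
        _ ≤ 2 * (2*δ) / s := by gcongr
        _ = 4*δ/s := by ring
    have hκhalf : κ ≤ 1/2 := by
      have h1 : 4*δ/s ≤ 4*δ := div_le_self (by positivity) hs1
      linarith
    have hvu : ⟪v, U y⟫ = 1 - κ^2/2 := by
      have e := norm_sub_sq_real (U y) v
      rw [hUy, hvnorm, ← hκdef, one_pow] at e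
      rw [real_inner_comm]; linarith [e]
    have hl1 : 0 ≤ ⟪q - P y, v⟫ := by
      have h1 := hqvar (P y) (hPmem y)
      have e1 : ⟪q - P y, v⟫ = t⁻¹ * ⟪q - P y, x - q⟫ := by
        rw [hvdef, real_inner_smul_right]
      have e2 : ⟪q - P y, x - q⟫ = -⟪x - q, P y - q⟫ := by
        rw [real_inner_comm]
        have e3 : q - P y = -(P y - q) := by abel
        rw [e3, inner_neg_right]
      rw [e1, e2]
      have : 0 ≤ -⟪x - q, P y - q⟫ := by linarith
      positivity
    have hl2 : -(δ * κ) ≤ ⟪q - P y, U y - v⟫ := by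
      have h1 : |⟪q - P y, U y - v⟫| ≤ ‖q - P y‖ * ‖U y - v‖ := abs_real_inner_le_norm _ _
      have h2 : ‖q - P y‖ * ‖U y - v‖ ≤ δ * κ := by
        rw [← hκdef]; exact mul_le_mul_of_nonneg_right hpq hκ0
      have h3 := neg_abs_le ⟪q - P y, U y - v⟫
      linarith [abs_le.1 (h1.trans h2)]
    have hqpu : -(δ * κ) ≤ ⟪q - P y, U y⟫ := by
      have e : U y = v + (U y - v) := by abel
      calc -(δ * κ) ≤ 0 + -(δ * κ) := by linarith
        _ ≤ ⟪q - P y, v⟫ + ⟪q - P y, U y - v⟫ := by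
            have := hl1; have := hl2; linarith
        _ = ⟪q - P y, U y⟫ := by rw [← inner_add_right, ← e]
    have hdecomp : ⟪x - P y, U y⟫ = t * ⟪v, U y⟫ + ⟪q - P y, U y⟫ := by
      have e : x - P y = (x - q) + (q - P y) := by abel
      rw [e, inner_add_left, hxq, real_inner_smul_left]
    have hκ4 : δ * κ ≤ ε/16 := by
      have h1 : δ * κ ≤ δ * (4*δ) := by
        have : κ ≤ 4*δ := le_trans hκs (div_le_self (by positivity) hs1)
        exact mul_le_mul_of_nonneg_left this hδpos.le
      have h2 : δ * (4*δ) = 4*δ^2 := by ring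
      rw [h2, hδsq] at h1
      linarith
    have htfin : t ≤ ε := by
      have h1 : t * ⟪v, U y⟫ ≥ t * (1/2) := by
        rw [hvu]
        have hk2 : κ^2 ≤ 1/4 := by
          have := mul_le_mul hκhalf hκhalf hκ0 (by norm_num : (0:ℝ) ≤ 1/2)
          calc κ^2 = κ * κ := sq κ
            _ ≤ 1/2 * (1/2) := this
            _ = 1/4 := by norm_num
        have : (1:ℝ) - κ^2/2 ≥ 1/2 := by linarith
        exact mul_le_mul_of_nonneg_left this ht.le
      have h2 : 0 ≥ t * (1/2) - δ * κ := by
        rw [hdecomp] at hxpu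
        linarith
      linarith [hκ4]
    exact hdone htfin
end

section
/- For every integer d ≥ 1 there exists a constant c_d > 0 (depending only on d) such that the following holds. Let C be a closed convex body in ℝ^d containing the closed unit ball centered at the origin and contained in the closed ball of radius d centered at the origin, and let ε be a real number with 0 < ε ≤ 1. Then there exists a finite set Q contained in the sphere of radius 2d centered at the origin with |Q| ≤ c_d · ε^{-(d-1)/2} such that, writing n(q) for the (unique) nearest point of C to q and h(q) = {x ∈ ℝ^d : ⟨x − n(q), q − n(q)⟩ ≤ 0}, one has: (i) C ⊆ h(q) for every q ∈ Q, and (ii) for every point p in the boundary of C there exists q ∈ Q such that the distance from p to the bounding hyperplane {x : ⟨x − n(q), q − n(q)⟩ = 0} of h(q) is at most ε/2. -/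
open Metric MeasureTheory Module
open scoped NNReal RealInnerProductSpace

/-!
Let `Q` be a maximal `√ε`-separated subset of the sphere of radius `2d`. The balls of radius
`√ε / 2` around its points are disjoint and fill part of an annulus of width `√ε`, whose volume is
linear in `√ε`; this gives `|Q| = O(ε^{-(d-1)/2})`. For a boundary point `p` with outer normal `u`,
the ray `p + t u` meets the sphere within `√ε` of some `q ∈ Q`. As `p` lies in the halfspace
`h(q)` and `n(q)` behind the supporting hyperplane at `p`, expanding `⟪n(q) - p, q - n(q)⟫`
bounds it by `ε / 4`; since `‖q - n(q)‖ ≥ d ≥ 1`, the same bound holds for the distance from `p`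
to the boundary of `h(q)`.
-/

theorem Metric.exists_finset_isCover_card_le {X : Type*} [PseudoEMetricSpace X] {A : Set X}
    {ε : ℝ≥0} {N : ℕ}
    (h : ∀ S : Finset X, (S : Set X) ⊆ A → IsSeparated ε (S : Set X) → S.card ≤ N) :
    ∃ Q : Finset X, (Q : Set X) ⊆ A ∧ Q.card ≤ N ∧ IsCover ε A Q := by
  have hpack : packingNumber ε A ≤ N := by
    refine iSup₂_le fun C hCA => iSup_le fun hC => ?_
    by_contra! hlt
    obtain ⟨T, hTC, hTcard⟩ := Set.exists_subset_encard_eq (Order.add_one_le_of_lt hlt)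
    have hT : T.Finite := Set.finite_of_encard_eq_coe hTcard
    have hle : T.encard ≤ N := by
      rw [← hT.coe_toFinset, Set.encard_coe_eq_coe_finsetCard, Nat.cast_le]
      exact h hT.toFinset (by simpa using hTC.trans hCA) (by simpa using hC.subset hTC)
    rw [hTcard] at hle
    exact (ENat.lt_add_one_iff (ENat.natCast_ne_top N)).2 le_rfl |>.not_ge hle
  have htop : packingNumber ε A ≠ ⊤ := ne_top_of_le_ne_top (ENat.natCast_ne_top N) hpack
  have hfin : (maximalSeparatedSet ε A).Finite :=
    Set.finite_of_encard_le_coe ((encard_maximalSeparatedSet htop).trans_le hpack)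
  refine ⟨hfin.toFinset, by simpa using maximalSeparatedSet_subset, ?_, ?_⟩
  · rw [← Nat.cast_le (α := ℕ∞), ← Set.encard_coe_eq_coe_finsetCard, hfin.coe_toFinset,
      encard_maximalSeparatedSet htop]
    exact hpack
  · simpa using isCover_maximalSeparatedSet htop

section Packing

variable {E : Type*} [NormedAddCommGroup E] [NormedSpace ℝ E] [FiniteDimensional ℝ E]
  [Nontrivial E]

theorem card_mul_pow_le_of_pairwiseDisjoint_ball {S : Finset E} {x : E}
    {R t : ℝ} (hS : (S : Set E) ⊆ sphere x R) (hdisj : (S : Set E).PairwiseDisjoint (ball · t))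
    (ht : 0 < t) (htR : t ≤ R) :
    S.card * t ^ finrank ℝ E ≤ (R + t) ^ finrank ℝ E - (R - t) ^ finrank ℝ E := by
  borelize E
  obtain ⟨μ, _⟩ : ∃ μ : Measure E, μ.IsAddHaarMeasure := ⟨Measure.addHaar, inferInstance⟩
  have hvol : ∀ y : E, ∀ r : ℝ, 0 ≤ r → μ.real (ball y r) = r ^ finrank ℝ E * μ.real (ball 0 1) :=
    fun y r hr => by
      rw [← Measure.addHaar_real_closedBall_eq_addHaar_real_ball,
        Measure.addHaar_real_closedBall μ y hr]
  have hunion : ⋃ q ∈ S, ball q t ⊆ ball x (R + t) := by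
    simp only [Set.iUnion_subset_iff]
    intro q hq y hy
    rw [mem_ball] at hy ⊢
    linarith [dist_triangle y q x, mem_sphere.1 (hS hq)]
  have hinner : Disjoint (⋃ q ∈ S, ball q t) (closedBall x (R - t)) := by
    simp only [Set.disjoint_iUnion_left]
    intro q hq
    refine Set.disjoint_left.2 fun y hy hy' => ?_
    rw [mem_ball] at hy
    rw [mem_closedBall] at hy'
    linarith [dist_triangle_left q x y, mem_sphere.1 (hS hq)]
  have hle : μ.real ((⋃ q ∈ S, ball q t) ∪ closedBall x (R - t)) ≤ μ.real (ball x (R + t)) :=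
    measureReal_mono (Set.union_subset hunion (closedBall_subset_ball (by linarith)))
  rw [measureReal_union hinner measurableSet_closedBall
      ((measure_mono hunion).trans_lt measure_ball_lt_top).ne measure_closedBall_lt_top.ne,
    measureReal_biUnion_finset hdisj (fun _ _ => measurableSet_ball),
    Measure.addHaar_real_closedBall_eq_addHaar_real_ball, hvol x (R - t) (by linarith),
    hvol x (R + t) (by linarith), Finset.sum_congr rfl fun q _ => hvol q t ht.le,
    Finset.sum_const, nsmul_eq_mul] at hle
  have hB : 0 < μ.real (ball 0 1) :=
    ENNReal.toReal_pos (measure_ball_pos μ 0 one_pos).ne' measure_ball_lt_top.ne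
  nlinarith

theorem card_le_of_isSeparated_of_subset_sphere {S : Finset E} {x : E} {R : ℝ}
    {δ : ℝ≥0} (hS : (S : Set E) ⊆ sphere x R) (hsep : IsSeparated δ (S : Set E)) (hδ : 0 < δ)
    (hδR : δ ≤ 2 * R) :
    (S.card : ℝ) ≤ 2 * finrank ℝ E * ((2 * R + δ) / δ) ^ (finrank ℝ E - 1) := by
  obtain ⟨m, hm⟩ : ∃ m, finrank ℝ E = m + 1 := Nat.exists_eq_add_one.2 finrank_pos
  set t : ℝ := δ / 2 with ht_def
  have ht : 0 < t := by positivity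
  have hdisj : (S : Set E).PairwiseDisjoint (ball · t) := fun q hq q' hq' hne => by
    have : (δ : ℝ) < dist q q' := by
      have : (δ : ENNReal) < edist q q' := hsep hq hq' hne
      rwa [edist_nndist, ENNReal.coe_lt_coe, ← NNReal.coe_lt_coe, coe_nndist] at this
    exact ball_disjoint_ball (by linarith)
  have hvol := card_mul_pow_le_of_pairwiseDisjoint_ball hS hdisj ht (by linarith)
  have hdiff : (R + t) ^ (m + 1) - (R - t) ^ (m + 1) ≤ 2 * t * (m + 1) * (R + t) ^ m := by
    have := abs_pow_sub_pow_le (R + t) (R - t) (m + 1)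
    rw [abs_of_nonneg (by linarith : 0 ≤ R + t), abs_of_nonneg (by linarith : 0 ≤ R - t),
      max_eq_left (by linarith), show R + t - (R - t) = 2 * t by ring,
      abs_of_pos (by positivity : 0 < 2 * t), Nat.add_sub_cancel] at this
    push_cast at this
    linarith [le_abs_self ((R + t) ^ (m + 1) - (R - t) ^ (m + 1))]
  rw [hm] at hvol ⊢
  have hcard : (S.card : ℝ) * t ^ m ≤ 2 * (m + 1) * (R + t) ^ m := by
    rw [pow_succ] at hvol
    nlinarith
  rw [Nat.add_sub_cancel, show (2 * R + δ) / δ = (R + t) / t by rw [ht_def]; field_simp,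
    div_pow, mul_div_assoc', le_div_iff₀ (by positivity)]
  push_cast
  linarith

theorem exists_finset_sphere_net (x : E) {R : ℝ} {δ : ℝ≥0} (hδ : 0 < δ)
    (hδR : δ ≤ 2 * R) :
    ∃ Q : Finset E, (Q : Set E) ⊆ sphere x R ∧
      (Q.card : ℝ) ≤ 2 * finrank ℝ E * ((2 * R + δ) / δ) ^ (finrank ℝ E - 1) ∧
      ∀ p ∈ sphere x R, ∃ q ∈ Q, dist p q ≤ δ := by
  set b : ℝ := 2 * finrank ℝ E * ((2 * R + δ) / δ) ^ (finrank ℝ E - 1)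
  obtain ⟨Q, hQ, hcard, hcover⟩ := exists_finset_isCover_card_le (A := sphere x R) (ε := δ)
    (N := ⌊b⌋₊) fun S hS hsep =>
      Nat.le_floor (card_le_of_isSeparated_of_subset_sphere hS hsep hδ hδR)
  have hb : 0 ≤ b := mul_nonneg (by positivity)
    (pow_nonneg (div_nonneg (by linarith [δ.2]) δ.2) _)
  refine ⟨Q, hQ, (Nat.cast_le.2 hcard).trans (Nat.floor_le hb), fun p hp => ?_⟩
  simpa using isCover_iff_subset_iUnion_closedBall.1 hcover hp

end Packing

theorem exists_nonneg_norm_add_smul_eq {E : Type*} [NormedAddCommGroup E] [NormedSpace ℝ E]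
    {p u : E} (hu : u ≠ 0) {r : ℝ} (hp : ‖p‖ ≤ r) : ∃ t : ℝ, 0 ≤ t ∧ ‖p + t • u‖ = r := by
  set T := (r + ‖p‖) / ‖u‖
  have hT : 0 ≤ T := div_nonneg (by linarith [norm_nonneg p]) (norm_nonneg u)
  have hcont : ContinuousOn (fun t : ℝ => ‖p + t • u‖) (Set.Icc 0 T) := by fun_prop
  have hend : r ≤ ‖p + T • u‖ := by
    have : ‖T • u‖ = r + ‖p‖ := by
      rw [norm_smul, Real.norm_of_nonneg hT, div_mul_cancel₀ _ (norm_ne_zero_iff.2 hu)]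
    linarith [norm_le_add_norm_add' p (T • u)]
  obtain ⟨t, ht, heq⟩ := intermediate_value_Icc hT hcont ⟨by simpa using hp, hend⟩
  exact ⟨t, ht.1, heq⟩

section InnerProduct

variable {F : Type*} [NormedAddCommGroup F] [InnerProductSpace ℝ F]

theorem exists_nearest_point_inner_le_zero [CompleteSpace F] {C : Set F} (hCl : IsClosed C)
    (hC : Convex ℝ C) (hne : C.Nonempty) (q : F) :
    ∃ n ∈ C, (∀ x ∈ C, dist q n ≤ dist q x) ∧ ∀ x ∈ C, ⟪x - n, q - n⟫ ≤ 0 := by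
  obtain ⟨n, hn, hmin⟩ := exists_norm_eq_iInf_of_complete_convex hne hCl.isComplete hC q
  refine ⟨n, hn, fun x hx => ?_, fun x hx => ?_⟩
  · rw [dist_eq_norm, dist_eq_norm, hmin]
    exact ciInf_le ⟨0, Set.forall_mem_range.2 fun _ => norm_nonneg _⟩ (⟨x, hx⟩ : C)
  · rw [real_inner_comm]
    exact (norm_eq_iInf_iff_real_inner_le_zero hC hn).1 hmin x hx

theorem Convex.exists_ne_zero_inner_sub_le_zero_of_notMem_interior [CompleteSpace F] {A : Set F}
    (hA : Convex ℝ A) (hAint : (interior A).Nonempty) {p : F} (hp : p ∉ interior A) :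
    ∃ u ≠ 0, ∀ x ∈ A, ⟪x - p, u⟫ ≤ 0 := by
  obtain ⟨f, hf, hmax⟩ := geometric_hahn_banach_of_nonempty_interior_point hA hp hAint
  set u := (InnerProductSpace.toDual ℝ F).symm f
  have hu : ∀ y, ⟪u, y⟫ = f y := fun y => InnerProductSpace.toDual_symm_apply
  refine ⟨u, fun h => hf ?_, fun x hx => ?_⟩
  · ext y
    simp [← hu, h]
  · rw [real_inner_comm, inner_sub_right, hu, hu]
    linarith [hmax x hx]

theorem infDist_le_abs_inner_div_norm {n v : F} (hv : v ≠ 0) (p : F) :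
    infDist p {x | ⟪x - n, v⟫ = 0} ≤ |⟪p - n, v⟫| / ‖v‖ := by
  set a := ⟪p - n, v⟫
  have hv2 : ‖v‖ ^ 2 ≠ 0 := by positivity
  have hmem : p - (a / ‖v‖ ^ 2) • v ∈ {x | ⟪x - n, v⟫ = 0} := by
    change ⟪_, v⟫ = 0
    rw [sub_right_comm, inner_sub_left, real_inner_smul_left,
      real_inner_self_eq_norm_sq, div_mul_cancel₀ _ hv2, sub_self]
  calc infDist p _ ≤ dist p (p - (a / ‖v‖ ^ 2) • v) := infDist_le_dist_of_mem hmem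
    _ = |a| / ‖v‖ := by
      rw [dist_eq_norm, sub_sub_cancel, norm_smul, Real.norm_eq_abs, abs_div,
        abs_of_nonneg (sq_nonneg ‖v‖)]
      field_simp

theorem inner_sub_sub_le_sq_div_four {p n u q : F} {t δ : ℝ} (hnp : ⟪n - p, u⟫ ≤ 0) (ht : 0 ≤ t)
    (hq : ‖q - (p + t • u)‖ ≤ δ) : ⟪n - p, q - n⟫ ≤ δ ^ 2 / 4 := by
  have hsplit : q - n = (q - (p + t • u)) + t • u - (n - p) := by abel
  have hcs : ⟪n - p, q - (p + t • u)⟫ ≤ ‖n - p‖ * δ :=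
    (real_inner_le_norm _ _).trans (mul_le_mul_of_nonneg_left hq (norm_nonneg _))
  rw [hsplit, inner_sub_right, inner_add_right, real_inner_smul_right, real_inner_self_eq_norm_sq]
  -- the left side is now at most `‖n - p‖ δ - ‖n - p‖²`
  nlinarith [mul_nonpos_of_nonneg_of_nonpos ht hnp, sq_nonneg (‖n - p‖ - δ / 2)]

theorem infDist_hyperplane_le_sq_div_four {p n u q : F} {t δ : ℝ} (hpn : ⟪p - n, q - n⟫ ≤ 0)
    (hnp : ⟪n - p, u⟫ ≤ 0) (ht : 0 ≤ t) (hq : dist q (p + t • u) ≤ δ) (hqn : 1 ≤ ‖q - n‖) :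
    infDist p {x | ⟪x - n, q - n⟫ = 0} ≤ δ ^ 2 / 4 := by
  have hv : q - n ≠ 0 := norm_pos_iff.1 (by linarith)
  have habs : |⟪p - n, q - n⟫| = ⟪n - p, q - n⟫ := by
    rw [abs_of_nonpos hpn, ← inner_neg_left, neg_sub]
  calc infDist p _ ≤ |⟪p - n, q - n⟫| / ‖q - n‖ := infDist_le_abs_inner_div_norm hv p
    _ ≤ |⟪p - n, q - n⟫| := div_le_self (abs_nonneg _) hqn
    _ ≤ δ ^ 2 / 4 := habs ▸ inner_sub_sub_le_sq_div_four hnp ht (dist_eq_norm q _ ▸ hq)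

end InnerProduct

theorem inv_sqrt_pow_eq_rpow {ε : ℝ} (hε : 0 ≤ ε) (k : ℕ) : (√ε ^ k)⁻¹ = ε ^ (-(k : ℝ) / 2) := by
  rw [Real.sqrt_eq_rpow, ← Real.rpow_natCast, ← Real.rpow_mul hε, ← Real.rpow_neg hε]
  ring_nf

/-- The core construction in Dudley's proof: a small family of points `Q` on the sphere of
radius `2d` whose induced supporting halfspaces (at the nearest points of `C`) contain `C`
and pass within `ε/2` of every boundary point of `C`. -/
theorem dudley_core_construction (d : ℕ) (hd : 1 ≤ d) :
    ∃ c : ℝ, 0 < c ∧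
      ∀ C : Set (EuclideanSpace ℝ (Fin d)),
        IsClosed C → Convex ℝ C →
        Metric.closedBall (0 : EuclideanSpace ℝ (Fin d)) 1 ⊆ C →
        C ⊆ Metric.closedBall (0 : EuclideanSpace ℝ (Fin d)) d →
        ∀ ε : ℝ, 0 < ε → ε ≤ 1 →
          ∃ Q : Finset (EuclideanSpace ℝ (Fin d)),
            (Q : Set (EuclideanSpace ℝ (Fin d))) ⊆
                Metric.sphere (0 : EuclideanSpace ℝ (Fin d)) (2 * d) ∧
            (Q.card : ℝ) ≤ c * ε ^ (-((d : ℝ) - 1) / 2) ∧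
            ∃ n : EuclideanSpace ℝ (Fin d) → EuclideanSpace ℝ (Fin d),
              (∀ q ∈ Q, n q ∈ C ∧ ∀ x ∈ C, dist q (n q) ≤ dist q x) ∧
              (∀ q ∈ Q, C ⊆ {x | inner ℝ (x - n q) (q - n q) ≤ (0 : ℝ)}) ∧
              (∀ p ∈ frontier C, ∃ q ∈ Q,
                Metric.infDist p {x | inner ℝ (x - n q) (q - n q) = (0 : ℝ)} ≤ ε / 2) := by
  have : Nontrivial (EuclideanSpace ℝ (Fin d)) :=
    have : Nonempty (Fin d) := ⟨⟨0, hd⟩⟩; inferInstance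
  have hd1 : (1 : ℝ) ≤ d := by exact_mod_cast hd
  refine ⟨2 * d * (4 * d + 1) ^ (d - 1), by positivity,
    fun C hCl hC hball hCd ε hε hε1 => ?_⟩
  set δ : ℝ≥0 := NNReal.sqrt ε.toNNReal
  have hδ : (δ : ℝ) = √ε := by simp [δ, hε.le]
  have hδ0 : 0 < δ := by simpa [δ] using hε
  have hδ1 : (δ : ℝ) ≤ 1 := by rw [hδ]; exact Real.sqrt_le_one.2 hε1
  obtain ⟨Q, hQ, hcard, hnet⟩ :=
    exists_finset_sphere_net (0 : EuclideanSpace ℝ (Fin d)) hδ0 (R := 2 * d) (by linarith)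
  have hint : (interior C).Nonempty :=
    ⟨0, interior_mono hball (mem_interior_iff_mem_nhds.2 (closedBall_mem_nhds 0 one_pos))⟩
  choose n hnC hmin hhalf using
    exists_nearest_point_inner_le_zero hCl hC (hint.mono interior_subset)
  refine ⟨Q, hQ, ?_, n, fun q _ => ⟨hnC q, hmin q⟩, fun q _ x hx => hhalf q x hx,
    fun p hp => ?_⟩
  · rw [finrank_euclideanSpace_fin] at hcard
    calc (Q.card : ℝ) ≤ 2 * d * ((2 * (2 * d) + δ) / δ) ^ (d - 1) := hcard
      _ ≤ 2 * d * ((4 * d + 1) / δ) ^ (d - 1) := by gcongr 2 * d * (?_ / _) ^ _; linarith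
      _ = _ := by
        rw [div_pow, div_eq_mul_inv, hδ, inv_sqrt_pow_eq_rpow hε.le, Nat.cast_sub hd,
          Nat.cast_one]
        ring
  · have hpC : p ∈ C := hCl.frontier_subset hp
    obtain ⟨u, hu, hsupp⟩ := hC.exists_ne_zero_inner_sub_le_zero_of_notMem_interior hint hp.2
    obtain ⟨t, ht, hpt⟩ := exists_nonneg_norm_add_smul_eq hu (r := 2 * d)
      (by linarith [mem_closedBall_zero_iff.1 (hCd hpC)])
    obtain ⟨q, hqQ, hq⟩ := hnet (p + t • u) (mem_sphere_zero_iff_norm.2 hpt)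
    refine ⟨q, hqQ, ?_⟩
    have hqn : 1 ≤ ‖q - n q‖ := by
      linarith [norm_sub_norm_le q (n q), mem_sphere_zero_iff_norm.1 (hQ hqQ),
        mem_closedBall_zero_iff.1 (hCd (hnC q))]
    calc infDist p _ ≤ (δ : ℝ) ^ 2 / 4 := infDist_hyperplane_le_sq_div_four (hhalf q p hpC)
          (hsupp (n q) (hnC q)) ht (by rwa [dist_comm]) hqn
      _ ≤ ε / 2 := by rw [hδ, Real.sq_sqrt hε.le]; linarith
end

section
/- Let x and y be nonzero vectors in ℝ^d. Then ‖x‖ · ‖y‖ · sin(angle(x, y)) ≤ max(‖x‖, ‖y‖) · ‖x − y‖, where angle(x, y) ∈ [0, π] is the angle between x and y. -/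
open InnerProductGeometry

open scoped RealInnerProductSpace

namespace InnerProductGeometry

variable {V : Type*} [NormedAddCommGroup V] [InnerProductSpace ℝ V]

theorem sq_sin_angle_mul_norm_mul_norm (x y : V) :
    (Real.sin (angle x y) * (‖x‖ * ‖y‖)) ^ 2 = ‖x‖ ^ 2 * ‖y‖ ^ 2 - ⟪x, y⟫ ^ 2 := by
  rw [sin_angle_mul_norm_mul_norm, Real.sq_sqrt (by nlinarith [real_inner_mul_inner_self_le x y]),
    real_inner_self_eq_norm_sq, real_inner_self_eq_norm_sq]
  ring

/-- `‖x‖ * sin (angle x y)` is the distance from `x` to the line `ℝ ∙ y`, which passes through `y`. -/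
theorem norm_mul_sin_angle_le_norm_sub (x y : V) : ‖x‖ * Real.sin (angle x y) ≤ ‖x - y‖ := by
  rcases eq_or_ne y 0 with rfl | hy0
  · simp
  have hy : 0 < ‖y‖ := norm_pos_iff.2 hy0
  refine le_of_mul_le_mul_right ?_ hy
  have hlhs : 0 ≤ ‖x‖ * Real.sin (angle x y) * ‖y‖ :=
    mul_nonneg (mul_nonneg (norm_nonneg x) (sin_angle_nonneg x y)) hy.le
  refine (pow_le_pow_iff_left₀ hlhs (by positivity) two_ne_zero).1 ?_
  have hsin : (‖x‖ * Real.sin (angle x y) * ‖y‖) ^ 2 = ‖x‖ ^ 2 * ‖y‖ ^ 2 - ⟪x, y⟫ ^ 2 := by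
    rw [← sq_sin_angle_mul_norm_mul_norm]; ring
  rw [hsin, mul_pow, norm_sub_sq_real]
  -- the difference of the two sides is `(‖y‖ ^ 2 - ⟪x, y⟫) ^ 2`
  nlinarith [sq_nonneg (‖y‖ ^ 2 - ⟪x, y⟫)]

end InnerProductGeometry

theorem sin_angle_area_bound_general (d : ℕ) (x y : EuclideanSpace ℝ (Fin d)) :
    ‖x‖ * ‖y‖ * Real.sin (InnerProductGeometry.angle x y) ≤ max ‖x‖ ‖y‖ * ‖x - y‖ :=
  calc ‖x‖ * ‖y‖ * Real.sin (angle x y) = ‖y‖ * (‖x‖ * Real.sin (angle x y)) := by ring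
    _ ≤ ‖y‖ * ‖x - y‖ := by gcongr; exact norm_mul_sin_angle_le_norm_sub x y
    _ ≤ max ‖x‖ ‖y‖ * ‖x - y‖ := by gcongr; exact le_max_right _ _

/-- Twice the area of the triangle `0, x, y` is at most `max ‖x‖ ‖y‖` times the length of
the side from `x` to `y`. -/
theorem sin_angle_area_bound (d : ℕ) (x y : EuclideanSpace ℝ (Fin d))
    (hx : x ≠ 0) (hy : y ≠ 0) :
    ‖x‖ * ‖y‖ * Real.sin (InnerProductGeometry.angle x y) ≤ max ‖x‖ ‖y‖ * ‖x - y‖ :=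
  sin_angle_area_bound_general d x y
end

section
/- Let d ≥ 1 be a real number and δ > 0, and let x and y be vectors in ℝ^n satisfying d ≤ ‖x‖ ≤ 2d, d ≤ ‖y‖ ≤ 2d, and ‖x − y‖ ≤ 2δ. Then sin(angle(x, y)) ≤ 4δ/d, where angle(x, y) ∈ [0, π] is the angle between x and y. -/
open InnerProductGeometry

/-! The component of `x` orthogonal to `y` has length `‖x‖ sin ∠(x, y)` and is at most
`‖x - y‖`, the distance from `x` to a point of the line `ℝ y`; dividing by `‖x‖ ≥ d` gives
`sin ∠(x, y) ≤ 2δ/d`. -/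

theorem InnerProductGeometry.norm_mul_sin_angle_le_norm_sub_s7 {V : Type*}
    [NormedAddCommGroup V] [InnerProductSpace ℝ V] (x y : V) :
    ‖x‖ * Real.sin (angle x y) ≤ ‖x - y‖ := by
  have hcos := norm_sub_sq_eq_norm_sq_add_norm_sq_sub_two_mul_norm_mul_norm_mul_cos_angle x y
  have hsq : (‖x‖ * Real.sin (angle x y)) ^ 2 ≤ ‖x - y‖ ^ 2 := by
    -- `‖x - y‖² = (‖y‖ - ‖x‖ cos θ)² + (‖x‖ sin θ)²`
    nlinarith [sq_nonneg (‖y‖ - ‖x‖ * Real.cos (angle x y)), Real.sin_sq_add_cos_sq (angle x y)]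
  exact (pow_le_pow_iff_left₀ (mul_nonneg (norm_nonneg x) (sin_angle_nonneg x y))
    (norm_nonneg _) two_ne_zero).1 hsq

theorem sin_angle_of_close_long_vectors_general (n : ℕ) (d δ : ℝ) (hd : 1 ≤ d)
    (x y : EuclideanSpace ℝ (Fin n))
    (hx₁ : d ≤ ‖x‖)
    (hxy : ‖x - y‖ ≤ 2 * δ) :
    Real.sin (InnerProductGeometry.angle x y) ≤ 4 * δ / d := by
  have hd₀ : 0 < d := by linarith
  have hx₀ : 0 < ‖x‖ := hd₀.trans_le hx₁
  have hδ : 0 ≤ δ := by linarith [norm_nonneg (x - y)]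
  calc Real.sin (angle x y) ≤ ‖x - y‖ / ‖x‖ := by
        rw [le_div_iff₀ hx₀, mul_comm]
        exact norm_mul_sin_angle_le_norm_sub_s7 x y
    _ ≤ 2 * δ / d := div_le_div₀ (by linarith) hxy hd₀ hx₁
    _ ≤ 4 * δ / d := by gcongr; linarith

/-- Two vectors of length between `d` and `2d` whose difference has norm at most `2δ`
make an angle whose sine is at most `4δ/d`. -/
theorem sin_angle_of_close_long_vectors (n : ℕ) (d δ : ℝ) (hd : 1 ≤ d) (hδ : 0 < δ)
    (x y : EuclideanSpace ℝ (Fin n))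
    (hx₁ : d ≤ ‖x‖) (hx₂ : ‖x‖ ≤ 2 * d) (hy₁ : d ≤ ‖y‖) (hy₂ : ‖y‖ ≤ 2 * d)
    (hxy : ‖x - y‖ ≤ 2 * δ) :
    Real.sin (InnerProductGeometry.angle x y) ≤ 4 * δ / d :=
  sin_angle_of_close_long_vectors_general n d δ hd x y hx₁ hxy
end

section
/- Let u and v be unit vectors in ℝ^d with ⟨u, v⟩ ≥ 0, and let w ∈ ℝ^d be a vector satisfying ⟨w, v⟩ ≥ 0 and ⟨w, u⟩ ≤ 0. Then |⟨w, u⟩| ≤ ‖w‖ · sin(angle(u, v)), where angle(u, v) ∈ [0, π] is the angle between u and v. -/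
open InnerProductGeometry

/-- If `u, v` are unit vectors with `⟪u, v⟫ ≥ 0` and `w` satisfies `⟪w, v⟫ ≥ 0` and
`⟪w, u⟫ ≤ 0`, then `|⟪w, u⟫| ≤ ‖w‖ · sin (angle u v)`. -/
theorem inner_abs_le_norm_mul_sin_angle (d : ℕ) (u v w : EuclideanSpace ℝ (Fin d))
    (hu : ‖u‖ = 1) (hv : ‖v‖ = 1)
    (huv : (0 : ℝ) ≤ inner ℝ u v) (hwv : (0 : ℝ) ≤ inner ℝ w v) (hwu : inner ℝ w u ≤ (0 : ℝ)) :
    |(inner ℝ w u : ℝ)| ≤ ‖w‖ * Real.sin (InnerProductGeometry.angle u v) := by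
  set c : ℝ := inner ℝ u v with hc
  have hcos : Real.cos (angle u v) = c := by
    rw [cos_angle, hu, hv, mul_one, div_one]
  have hc1 : c ≤ 1 := by
    calc c ≤ ‖u‖ * ‖v‖ := real_inner_le_norm u v
    _ = 1 := by rw [hu, hv]; ring
  have hsin : Real.sin (angle u v) = Real.sqrt (1 - c ^ 2) := by
    have h1 : Real.sin (angle u v) ^ 2 = 1 - c ^ 2 := by
      have := Real.sin_sq_add_cos_sq (angle u v)
      rw [hcos] at this; linarith
    rw [← h1, Real.sqrt_sq (Real.sin_nonneg_of_nonneg_of_le_pi (angle_nonneg u v) (angle_le_pi u v))]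
  set z : EuclideanSpace ℝ (Fin d) := u - c • v with hz
  have hnz : ‖z‖ ^ 2 = 1 - c ^ 2 := by
    have : ‖z‖ ^ 2 = inner ℝ z z := by
      rw [real_inner_self_eq_norm_sq]
    have huu : (inner ℝ u u : ℝ) = 1 := by
      rw [real_inner_self_eq_norm_sq, hu]; norm_num
    have hvv : (inner ℝ v v : ℝ) = 1 := by
      rw [real_inner_self_eq_norm_sq, hv]; norm_num
    have hvu : (inner ℝ v u : ℝ) = c := by rw [real_inner_comm]
    rw [this, hz]
    simp only [inner_sub_left, inner_sub_right, real_inner_smul_left, real_inner_smul_right,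
      huu, hvv, hvu, ← hc]
    ring_nf
  have hznorm : ‖z‖ = Real.sqrt (1 - c ^ 2) := by
    rw [← hnz]
    exact (Real.sqrt_sq (norm_nonneg z)).symm
  have hwz : (inner ℝ w z : ℝ) = inner ℝ w u - c * inner ℝ w v := by
    rw [hz, inner_sub_right, real_inner_smul_right]
  have key : -(inner ℝ w u : ℝ) ≤ ‖w‖ * ‖z‖ := by
    have h1 : -(inner ℝ w u : ℝ) ≤ -(inner ℝ w z : ℝ) := by
      rw [hwz]
      nlinarith [mul_nonneg huv hwv]
    have h2 : -(inner ℝ w z : ℝ) ≤ ‖w‖ * ‖z‖ := by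
      have := abs_real_inner_le_norm w z
      have := neg_abs_le (inner ℝ w z : ℝ)
      linarith
    linarith
  rw [abs_of_nonpos hwu, hsin, ← hznorm]
  exact key
end
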